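/- Let A be a Weyl tensor on (V,h) with dim V = n ≥ 3, and let A* denote the conjugate tensor A*(x,y,z,w) := −A(x,y,w,z). If n ≠ 4, then A* satisfies A*_{ijkl} + A*_{ijlk} = (4/(n−4)) · (Λ Ric*)_{ij} · h_{kl}, where Ric* is the Ricci tensor of A* (equal to Ric*(A)) and Λ denotes the antisymmetric part. -/

import Mathlib

/-!
Contracting the Weyl relation `A(x,y,z,w) + A(x,y,w,z) = c·(Ric(y,x) − Ric(x,y))·h(z,w)` over the
first and last slots shows `Ric(A*) = Ric − c·(Ric − Ricᵀ)`, so the antisymmetric part of the Ricci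
tensor only gets rescaled by `1 − 2c`. Since `A*(x,y,z,w) + A*(x,y,w,z)` is minus the left-hand side
of the Weyl relation, `A*` again satisfies a Weyl relation, with constant `−c/(1 − 2c)`; for
`c = 2/n` this is `−2/(n − 4)`.
-/

namespace WeylTensor

variable {ι : Type*} [Fintype ι]

def ricci (g : Matrix ι ι ℝ) (T : ι → ι → ι → ι → ℝ) (x y : ι) : ℝ :=
  ∑ i, ∑ j, g i j * T i x y j

def conjugate (T : ι → ι → ι → ι → ℝ) (x y z w : ι) : ℝ := -T x y w z

def WeylRelation (c : ℝ) (h : Matrix ι ι ℝ) (Ric : ι → ι → ℝ) (T : ι → ι → ι → ι → ℝ) : Prop :=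
  ∀ x y z w, T x y z w + T x y w z = c * (Ric y x - Ric x y) * h z w

variable [DecidableEq ι] {c : ℝ} {h hinv : Matrix ι ι ℝ} {A : ι → ι → ι → ι → ℝ}

theorem ricci_conjugate (hinv_mul : hinv * h = 1) (hA : WeylRelation c h (ricci hinv A) A)
    (x y : ι) :
    ricci hinv (conjugate A) x y =
      ricci hinv A x y - c * (ricci hinv A x y - ricci hinv A y x) := by
  set Ric := ricci hinv A
  have hterm : ∀ i j, hinv i j * conjugate A i x y j =
      hinv i j * A i x y j - c * (Ric x i - Ric i x) * (hinv i j * h j y) := by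
    intro i j
    have := hA i x j y
    simp only [conjugate]
    linear_combination (-hinv i j) * this
  have hcontract : ∀ i, ∑ j, c * (Ric x i - Ric i x) * (hinv i j * h j y) =
      c * (Ric x i - Ric i x) * (1 : Matrix ι ι ℝ) i y := by
    intro i
    rw [← Finset.mul_sum, ← Matrix.mul_apply, hinv_mul]
  simp only [ricci, hterm, Finset.sum_sub_distrib, hcontract, Matrix.one_apply, mul_ite, mul_one,
    mul_zero, Finset.sum_ite_eq', Finset.mem_univ, if_true]
  rfl

theorem ricci_conjugate_sub_swap (hinv_mul : hinv * h = 1)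
    (hA : WeylRelation c h (ricci hinv A) A) (x y : ι) :
    ricci hinv (conjugate A) x y - ricci hinv (conjugate A) y x =
      (1 - 2 * c) * (ricci hinv A x y - ricci hinv A y x) := by
  rw [ricci_conjugate hinv_mul hA, ricci_conjugate hinv_mul hA]
  ring

theorem weylRelation_conjugate (hinv_mul : hinv * h = 1) (hc : 1 - 2 * c ≠ 0)
    (hA : WeylRelation c h (ricci hinv A) A) :
    WeylRelation (-c / (1 - 2 * c)) h (ricci hinv (conjugate A)) (conjugate A) := by
  intro x y z w
  rw [ricci_conjugate_sub_swap hinv_mul hA]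
  have hcancel : -c / (1 - 2 * c) * ((1 - 2 * c) * (ricci hinv A y x - ricci hinv A x y)) =
      -c * (ricci hinv A y x - ricci hinv A x y) := by
    rw [← mul_assoc, div_mul_cancel₀ _ hc]
  simp only [conjugate, hcancel]
  linear_combination -hA x y z w

end WeylTensor

open WeylTensor in
theorem conjugate_weyl_relation_n_ne_four_general
    {n : ℕ} (hn4 : n ≠ 4)
    (h hinv : Matrix (Fin n) (Fin n) ℝ)
    (hinv2 : hinv * h = 1)
    (A : Fin n → Fin n → Fin n → Fin n → ℝ)
    (Ric : Fin n → Fin n → ℝ)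
    (hRic : ∀ x y, Ric x y = ∑ i, ∑ j, hinv i j * A i x y j)
    (hWeyl : ∀ x y z w, A x y z w + A x y w z =
      (2 / (n : ℝ)) * (Ric y x - Ric x y) * h z w)
    (Astar : Fin n → Fin n → Fin n → Fin n → ℝ)
    (hAstar : ∀ x y z w, Astar x y z w = - A x y w z)
    (RicStar : Fin n → Fin n → ℝ)
    (hRicStar : ∀ x y, RicStar x y = ∑ i, ∑ j, hinv i j * Astar i x y j) :
    ∀ i j k l, Astar i j k l + Astar i j l k =
      (4 / ((n : ℝ) - 4)) * ((1/2) * (RicStar i j - RicStar j i)) * h k l := by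
  obtain rfl : Ric = ricci hinv A := funext₂ hRic
  obtain rfl : Astar = conjugate A := by ext; exact hAstar ..
  obtain rfl : RicStar = ricci hinv (conjugate A) := funext₂ hRicStar
  intro i j k l
  have hn : (n : ℝ) ≠ 0 := Nat.cast_ne_zero.mpr (Fin.pos i).ne'
  have hn4' : (n : ℝ) - 4 ≠ 0 := sub_ne_zero.mpr (mod_cast hn4)
  have hc : 1 - 2 * (2 / (n : ℝ)) = ((n : ℝ) - 4) / n := by field_simp; ring
  have hcoeff : -(2 / (n : ℝ)) / (1 - 2 * (2 / n)) = -(4 / ((n : ℝ) - 4) * (1 / 2)) := by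
    rw [hc]; field_simp; ring
  rw [weylRelation_conjugate hinv2 (hc ▸ div_ne_zero hn4' hn) hWeyl i j k l, hcoeff]
  ring

/-- For a Weyl tensor `A` on `(V,h)` with `n ≠ 4`, the conjugate
tensor `A*(x,y,z,w) = −A(x,y,w,z)` satisfies
`A*_{ijkl} + A*_{ijlk} = (4/(n−4))·(Λ Ric*)_{ij}·h_{kl}`. -/
theorem conjugate_weyl_relation_n_ne_four
    {n : ℕ} (hn : 3 ≤ n) (hn4 : n ≠ 4)
    (h hinv : Matrix (Fin n) (Fin n) ℝ)
    (hsymm : ∀ i j, h i j = h j i)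
    (hinv1 : h * hinv = 1) (hinv2 : hinv * h = 1)
    (A : Fin n → Fin n → Fin n → Fin n → ℝ)
    (hA12 : ∀ i j k l, A i j k l = - A j i k l)
    (hBianchi : ∀ i j k l, A i j k l + A j k i l + A k i j l = 0)
    (Ric : Fin n → Fin n → ℝ)
    (hRic : ∀ x y, Ric x y = ∑ i, ∑ j, hinv i j * A i x y j)
    (hWeyl : ∀ x y z w, A x y z w + A x y w z =
      (2 / (n : ℝ)) * (Ric y x - Ric x y) * h z w)
    (Astar : Fin n → Fin n → Fin n → Fin n → ℝ)
    (hAstar : ∀ x y z w, Astar x y z w = - A x y w z)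
    (RicStar : Fin n → Fin n → ℝ)
    (hRicStar : ∀ x y, RicStar x y = ∑ i, ∑ j, hinv i j * Astar i x y j) :
    ∀ i j k l, Astar i j k l + Astar i j l k =
      (4 / ((n : ℝ) - 4)) * ((1/2) * (RicStar i j - RicStar j i)) * h k l :=
  conjugate_weyl_relation_n_ne_four_general hn4 h hinv hinv2 A Ric hRic hWeyl Astar hAstar RicStar
    hRicStar
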